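/- Let μ be a computable measure on 2^ω and let f be a computable order. Then there is a constant d such that for every non-atom X of μ satisfying KA(X↾f(n)) ≥ n for all n, the local granularity satisfies g_μ^X(n) ≤ f(n + d) for all n. -/

import Mathlib

open MeasureTheory
open Filter

/-- The length-`n` initial segment of an infinite binary sequence, as a list. -/
def strTake (X : ℕ → Bool) (n : ℕ) : List Bool := (List.range n).map X

/-- An order: a non-decreasing, unbounded function `ℕ → ℕ` with value `0` at `0`. -/
def IsOrder (f : ℕ → ℕ) : Prop :=
  Monotone f ∧ (∀ m, ∃ n, m ≤ f n) ∧ f 0 = 0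

/-- A computable order. -/
def ComputableOrder (f : ℕ → ℕ) : Prop := Computable f ∧ IsOrder f

/-- Generalized inverse of an order: `ordInv g k = min {m | g m ≥ k}`. -/
noncomputable def ordInv (g : ℕ → ℕ) (k : ℕ) : ℕ := sInf {m | k ≤ g m}

/-- A semi-measure on binary strings: `m ε = 1`, nonnegative, and superadditive
on the two one-bit extensions. -/
def IsSemiMeasure (m : List Bool → ℝ) : Prop :=
  m [] = 1 ∧ (∀ σ, 0 ≤ m σ) ∧ ∀ σ, m (σ ++ [false]) + m (σ ++ [true]) ≤ m σ

/-- A function on strings is left-c.e. if it is the limit of a computable,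
non-decreasing sequence of dyadic rational approximations from below. -/
def IsLeftCE (m : List Bool → ℝ) : Prop :=
  ∃ f : List Bool × ℕ → ℕ, Computable f ∧
    (∀ σ, Monotone fun i => (f (σ, i) : ℝ) / 2 ^ i) ∧
    ∀ σ, Tendsto (fun i => (f (σ, i) : ℝ) / 2 ^ i) atTop (nhds (m σ))

/-- A universal left-c.e. semi-measure: multiplicatively dominates every
left-c.e. semi-measure. -/
def IsUniversalSemiMeasure (M : List Bool → ℝ) : Prop :=
  IsSemiMeasure M ∧ IsLeftCE M ∧
    ∀ ρ, IsSemiMeasure ρ → IsLeftCE ρ → ∃ c : ℕ, ∀ σ, ρ σ ≤ 2 ^ c * M σ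

/-- A priori complexity with respect to the semi-measure `M`: `KA σ = -log₂ M(σ)`. -/
noncomputable def KA (M : List Bool → ℝ) (σ : List Bool) : ℝ := - Real.logb 2 (M σ)


/-- The basic open cylinder of a binary string in Cantor space. -/
def cyl (σ : List Bool) : Set (ℕ → Bool) := {X | strTake X σ.length = σ}

/-- A measure on Cantor space is computable if the values of the cylinders can be
uniformly approximated to any precision `2⁻ⁱ` by a computable function
(with dyadic rational values `f(σ,i)/2ⁱ`). -/
def ComputableMeasure (μ : Measure (ℕ → Bool)) : Prop :=
  ∃ f : List Bool × ℕ → ℕ, Computable f ∧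
    ∀ σ i, |(μ (cyl σ)).toReal - (f (σ, i) : ℝ) / 2 ^ i| ≤ (2 : ℝ)⁻¹ ^ i

/-- A `μ`-Martin-Löf test: a uniformly c.e. sequence of sets of strings generating
open sets whose `μ`-measures are bounded by `2⁻ⁱ`. -/
def MLTest (μ : Measure (ℕ → Bool)) (V : ℕ → Set (List Bool)) : Prop :=
  REPred (fun p : ℕ × List Bool => p.2 ∈ V p.1) ∧
    ∀ i, μ (⋃ σ ∈ V i, cyl σ) ≤ 2⁻¹ ^ i

/-- `X` is `μ`-Martin-Löf random if it passes every `μ`-Martin-Löf test. -/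
def MLRandom (μ : Measure (ℕ → Bool)) (X : ℕ → Bool) : Prop :=
  ∀ V, MLTest μ V → ∃ i, X ∉ ⋃ σ ∈ V i, cyl σ

/-- The local granularity of `μ` along a non-atom `X`:
`g_μ^X(n) = min {k | μ(X↾k) < 2⁻ⁿ}`. -/
noncomputable def localGranularity (μ : Measure (ℕ → Bool)) (X : ℕ → Bool) (n : ℕ) : ℕ :=
  sInf {k | μ (cyl (strTake X k)) < 2⁻¹ ^ n}

/-!
The cylinder measure `σ ↦ μ(σ)` is a semi-measure, and it is left-c.e. because its computable
approximations, shifted down by a few units of precision, increase to it. Universality of `M`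
thus gives `μ(σ) ≤ 2^c M(σ)`. For `σ = X↾f(n+c+1)` the complexity hypothesis says
`M(σ) ≤ 2^-(n+c+1)`, so `μ(σ) ≤ 2^-(n+1) < 2^-n` and `g_μ^X(n) ≤ f(n+c+1)`.
-/

open scoped ENNReal

@[simp]
lemma strTake_length (X : ℕ → Bool) (n : ℕ) : (strTake X n).length = n := by
  simp [strTake]

lemma strTake_succ (X : ℕ → Bool) (n : ℕ) : strTake X (n + 1) = strTake X n ++ [X n] := by
  simp [strTake, List.range_succ]

lemma strTake_eq_ofFn (X : ℕ → Bool) (n : ℕ) : strTake X n = List.ofFn fun i : Fin n => X i :=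
  List.ext_getElem (by simp) (by simp [strTake])

lemma measurableSet_cyl (σ : List Bool) : MeasurableSet (cyl σ) := by
  have : cyl σ = (fun X (i : Fin σ.length) => X i) ⁻¹' {v | List.ofFn v = σ} := by
    ext X; simp [cyl, strTake_eq_ofFn]
  rw [this]
  exact measurable_pi_lambda _ (fun i => measurable_pi_apply _) MeasurableSet.of_discrete

lemma cyl_nil : cyl [] = Set.univ := by
  ext X; simp [cyl, strTake]

lemma cyl_append_singleton_subset (σ : List Bool) (b : Bool) : cyl (σ ++ [b]) ⊆ cyl σ := by
  intro X hX
  simp only [cyl, Set.mem_ofPred_eq, List.length_append, List.length_singleton, strTake_succ] at hX ⊢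
  exact (List.append_inj hX (by simp)).1

lemma disjoint_cyl_append_false_true (σ : List Bool) :
    Disjoint (cyl (σ ++ [false])) (cyl (σ ++ [true])) := by
  rw [Set.disjoint_left]
  intro X h₁ h₂
  simp only [cyl, Set.mem_ofPred_eq, List.length_append, List.length_singleton] at h₁ h₂
  simpa using h₁.symm.trans h₂

lemma isSemiMeasure_measure_cyl (μ : Measure (ℕ → Bool)) [IsProbabilityMeasure μ] :
    IsSemiMeasure fun σ => (μ (cyl σ)).toReal := by
  refine ⟨by simp [cyl_nil], fun σ => ENNReal.toReal_nonneg, fun σ => ?_⟩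
  rw [← ENNReal.toReal_add (measure_ne_top μ _) (measure_ne_top μ _),
    ← measure_union (disjoint_cyl_append_false_true σ) (measurableSet_cyl _)]
  exact ENNReal.toReal_mono (measure_ne_top μ _) <| measure_mono <|
    Set.union_subset (cyl_append_singleton_subset σ false) (cyl_append_singleton_subset σ true)

/-- Subtracting `3` ensures that the next, finer approximation is already above this one. -/
lemma dyadic_sub_three_bounds {ν : ℝ} {a i : ℕ} (h : |ν - a / 2 ^ i| ≤ 2⁻¹ ^ i) :
    ν - 4 * 2⁻¹ ^ i ≤ ((a - 3 : ℕ) : ℝ) / 2 ^ i ∧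
      ((a - 3 : ℕ) : ℝ) / 2 ^ i ≤ max 0 (ν - 2 * 2⁻¹ ^ i) := by
  rw [div_eq_mul_inv, ← inv_pow] at h ⊢
  obtain ⟨hlo, hhi⟩ := abs_le.1 h
  have ht : (0 : ℝ) ≤ 2⁻¹ ^ i := by positivity
  rcases le_or_gt 3 a with ha | ha
  · rw [Nat.cast_sub ha, Nat.cast_ofNat]
    exact ⟨by linarith, le_max_of_le_right (by linarith)⟩
  · have ha' : (a : ℝ) < 3 := by exact_mod_cast ha
    rw [Nat.sub_eq_zero_of_le ha.le, Nat.cast_zero, zero_mul]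
    exact ⟨by nlinarith, le_max_left _ _⟩

lemma isLeftCE_of_approx {m : List Bool → ℝ} (hm : ∀ σ, 0 ≤ m σ) {f : List Bool × ℕ → ℕ}
    (hf : Computable f) (happrox : ∀ σ i, |m σ - f (σ, i) / 2 ^ i| ≤ 2⁻¹ ^ i) : IsLeftCE m := by
  have hlo σ i := (dyadic_sub_three_bounds (happrox σ i)).1
  have hhi σ i := (dyadic_sub_three_bounds (happrox σ i)).2
  refine ⟨fun p => f p - 3, (Primrec.nat_sub.comp Primrec.id (Primrec.const 3)).to_comp.comp hf,
    fun σ => monotone_nat_of_le_succ fun i => (hhi σ i).trans (max_le (by positivity) ?_),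
    fun σ => ?_⟩
  · linarith [hlo σ (i + 1), pow_succ (2⁻¹ : ℝ) i]
  · have hpow := tendsto_pow_atTop_nhds_zero_of_lt_one (r := (2⁻¹ : ℝ)) (by norm_num) (by norm_num)
    have hlim : Tendsto (fun i : ℕ => m σ - 4 * 2⁻¹ ^ i) atTop (nhds (m σ)) := by
      simpa using tendsto_const_nhds.sub (hpow.const_mul 4)
    refine tendsto_of_tendsto_of_tendsto_of_le_of_le hlim tendsto_const_nhds (hlo σ) fun i =>
      (hhi σ i).trans (max_le (hm σ) ?_)
    linarith [show (0 : ℝ) ≤ 2⁻¹ ^ i by positivity]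

lemma isLeftCE_measure_cyl {μ : Measure (ℕ → Bool)} (hμ : ComputableMeasure μ) :
    IsLeftCE fun σ => (μ (cyl σ)).toReal :=
  let ⟨_, hf, happrox⟩ := hμ
  isLeftCE_of_approx (fun _ => ENNReal.toReal_nonneg) hf happrox

lemma le_inv_two_pow_of_le_neg_logb {m : ℝ} (hm : 0 ≤ m) {n : ℕ}
    (h : (n : ℝ) ≤ -Real.logb 2 m) : m ≤ 2⁻¹ ^ n := by
  rcases hm.eq_or_lt with rfl | hm
  · positivity
  · rw [← Real.rpow_natCast, Real.inv_rpow zero_le_two, ← Real.rpow_neg zero_le_two]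
    exact (Real.logb_le_iff_le_rpow one_lt_two hm).1 (by linarith)

lemma localGranularity_le_of_toReal_lt {μ : Measure (ℕ → Bool)} [IsFiniteMeasure μ]
    {X : ℕ → Bool} {k n : ℕ} (h : (μ (cyl (strTake X k))).toReal < 2⁻¹ ^ n) :
    localGranularity μ X n ≤ k := by
  refine Nat.sInf_le (show μ _ < (2⁻¹ : ℝ≥0∞) ^ n from ?_)
  rw [← ENNReal.toReal_lt_toReal (measure_ne_top _ _) (by simp)]
  simpa using h

theorem stmt13_general (M : List Bool → ℝ) (hM : IsUniversalSemiMeasure M)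
    (μ : Measure (ℕ → Bool)) (hprob : IsProbabilityMeasure μ)
    (hcomp : ComputableMeasure μ) (f : ℕ → ℕ) :
    ∃ d : ℕ, ∀ X : ℕ → Bool, μ {X} = 0 →
      (∀ n : ℕ, (n : ℝ) ≤ KA M (strTake X (f n))) →
      ∀ n, localGranularity μ X n ≤ f (n + d) := by
  obtain ⟨c, hc⟩ := hM.2.2 _ (isSemiMeasure_measure_cyl μ) (isLeftCE_measure_cyl hcomp)
  refine ⟨c + 1, fun X _ hKA n => localGranularity_le_of_toReal_lt ?_⟩
  set σ := strTake X (f (n + (c + 1)))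
  calc (μ (cyl σ)).toReal ≤ 2 ^ c * M σ := hc σ
    _ ≤ 2 ^ c * 2⁻¹ ^ (n + (c + 1)) := by
      gcongr
      exact le_inv_two_pow_of_le_neg_logb (hM.1.2.1 σ) (hKA _)
    _ = 2⁻¹ ^ (n + 1) := by
      rw [show n + (c + 1) = c + (n + 1) by ring, pow_add, ← mul_assoc, ← mul_pow]
      norm_num
    _ < 2⁻¹ ^ n := pow_lt_pow_right_of_lt_one₀ (by norm_num) (by norm_num) n.lt_succ_self

theorem stmt13 (M : List Bool → ℝ) (hM : IsUniversalSemiMeasure M)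
    (μ : Measure (ℕ → Bool)) (hprob : IsProbabilityMeasure μ)
    (hcomp : ComputableMeasure μ) (f : ℕ → ℕ) (hf : Computable f)
    (hmono : Monotone f) (hunb : ∀ m, ∃ n, m ≤ f n) :
    ∃ d : ℕ, ∀ X : ℕ → Bool, μ {X} = 0 →
      (∀ n : ℕ, (n : ℝ) ≤ KA M (strTake X (f n))) →
      ∀ n, localGranularity μ X n ≤ f (n + d) :=
  stmt13_general M hM μ hprob hcomp f
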